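/- Let S, T be positive definite symmetric n×n matrices with S ⪯ T. Then tr(T^{-1/2}(T − S)) ≤ 2(tr(√T) − tr(√S)). -/

import Mathlib

open Matrix
open scoped Classical

/-- The positive semidefinite square root of a matrix (zero if not PSD). -/
noncomputable def sqrtM {n : ℕ} (A : Matrix (Fin n) (Fin n) ℝ) : Matrix (Fin n) (Fin n) ℝ :=
  if h : A.PosSemidef then
    h.1.eigenvectorUnitary.1 * diagonal ((↑) ∘ (√·) ∘ h.1.eigenvalues) *
      (star h.1.eigenvectorUnitary : Matrix (Fin n) (Fin n) ℝ) else 0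

/-- Euclidean norm of a vector. -/
noncomputable def euclNorm {n : ℕ} (v : Fin n → ℝ) : ℝ := Real.sqrt (v ⬝ᵥ v)

/-- The ℓ₂ operator (spectral) norm of a matrix. -/
noncomputable def opNorm {n : ℕ} (A : Matrix (Fin n) (Fin n) ℝ) : ℝ :=
  ⨆ u : {u : Fin n → ℝ // euclNorm u ≤ 1}, euclNorm (A *ᵥ u)

/-! With `A = √T` and `B = √S`, the claim says `tr (A⁻¹ (A² - B²)) ≤ 2 (tr A - tr B)`. The
difference of the two sides is `tr (A⁻¹ (A - B)²)`, as the cross terms `A⁻¹ A B` and `A⁻¹ B A`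
both have trace `tr B`; and `tr (A⁻¹ (A - B)²) = tr ((A - B)ᴴ A⁻¹ (A - B)) ≥ 0` because
`A⁻¹` is positive definite and `A - B` is Hermitian. -/

namespace Matrix

section Trace

open scoped ComplexOrder

variable {m 𝕜 : Type*} [Fintype m] [DecidableEq m] [RCLike 𝕜] {A B : Matrix m m 𝕜}

theorem trace_inv_mul_sub_mul_self (hA : IsUnit A) :
    (A⁻¹ * ((A - B) * (A - B))).trace =
      2 * (A.trace - B.trace) - (A⁻¹ * (A * A - B * B)).trace := by
  have hdet := (isUnit_iff_isUnit_det A).mp hA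
  have hsplit : A⁻¹ * ((A - B) * (A - B)) =
      2 • (A - B) - A⁻¹ * (A * A - B * B) + (B - A⁻¹ * B * A) := by
    simp only [mul_sub, sub_mul, ← mul_assoc, nonsing_inv_mul A hdet, one_mul]
    noncomm_ring
  have hconj : (A⁻¹ * B * A).trace = B.trace := by
    rw [trace_mul_cycle, mul_nonsing_inv A hdet, one_mul]
  rw [hsplit, trace_add, trace_sub, trace_sub, hconj, sub_self, add_zero, trace_smul, trace_sub,
    two_nsmul, two_mul]

theorem trace_inv_mul_sub_mul_self_nonneg (hA : A.PosDef) (hB : B.IsHermitian) :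
    0 ≤ (A⁻¹ * ((A - B) * (A - B))).trace := by
  have hquad : ((A - B)ᴴ * A⁻¹ * (A - B)).PosSemidef :=
    hA.inv.posSemidef.conjTranspose_mul_mul_same (A - B)
  rw [conjTranspose_sub, hA.isHermitian.eq, hB.eq] at hquad
  rw [← trace_mul_comm, ← trace_mul_cycle]
  exact hquad.trace_nonneg

theorem trace_inv_mul_mul_self_sub_mul_self_le (hA : A.PosDef) (hB : B.IsHermitian) :
    (A⁻¹ * (A * A - B * B)).trace ≤ 2 * (A.trace - B.trace) := by
  have h := trace_inv_mul_sub_mul_self_nonneg hA hB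
  rwa [trace_inv_mul_sub_mul_self hA.isUnit, sub_nonneg] at h

end Trace

end Matrix

section SqrtM

variable {n : ℕ} {A : Matrix (Fin n) (Fin n) ℝ}

theorem sqrtM_mul_self (hA : A.PosSemidef) : sqrtM A * sqrtM A = A := by
  rw [sqrtM, dif_pos hA]
  set U : Matrix (Fin n) (Fin n) ℝ := (hA.1.eigenvectorUnitary : Matrix (Fin n) (Fin n) ℝ)
  have hU : star U * U = 1 := Unitary.coe_star_mul_self _
  conv_rhs => rw [hA.1.spectral_theorem, Unitary.conjStarAlgAut_apply]
  calc _ = U * (diagonal ((↑) ∘ (√·) ∘ hA.1.eigenvalues) * (star U * U) *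
        diagonal ((↑) ∘ (√·) ∘ hA.1.eigenvalues)) * star U := by simp only [mul_assoc]
    _ = _ := by
      rw [hU, mul_one, diagonal_mul_diagonal]
      congr 3
      funext i
      simp [Real.mul_self_sqrt (hA.eigenvalues_nonneg i)]

theorem posSemidef_sqrtM (hA : A.PosSemidef) : (sqrtM A).PosSemidef := by
  rw [sqrtM, dif_pos hA]
  have hD : (diagonal ((↑) ∘ (√·) ∘ hA.1.eigenvalues) : Matrix (Fin n) (Fin n) ℝ).PosSemidef :=
    posSemidef_diagonal_iff.mpr fun i => by simp [Real.sqrt_nonneg]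
  simpa [Unitary.coe_star, star_eq_conjTranspose] using
    hD.mul_mul_conjTranspose_same hA.1.eigenvectorUnitary.1

theorem posDef_sqrtM (hA : A.PosDef) : (sqrtM A).PosDef := by
  refine (posSemidef_sqrtM hA.posSemidef).posDef_iff_isUnit.mpr
    (isUnit_of_mul_isUnit_left (y := sqrtM A) ?_)
  rw [sqrtM_mul_self hA.posSemidef]
  exact hA.isUnit

end SqrtM

theorem trace_invsqrt_mul_diff_le_general {n : ℕ} {S T : Matrix (Fin n) (Fin n) ℝ}
    (hS : S.PosDef) (hT : T.PosDef) :
    ((sqrtM T)⁻¹ * (T - S)).trace ≤ 2 * ((sqrtM T).trace - (sqrtM S).trace) := by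
  have h := trace_inv_mul_mul_self_sub_mul_self_le (posDef_sqrtM hT)
    (posSemidef_sqrtM hS.posSemidef).isHermitian
  rwa [sqrtM_mul_self hT.posSemidef, sqrtM_mul_self hS.posSemidef] at h

theorem trace_invsqrt_mul_diff_le {n : ℕ} {S T : Matrix (Fin n) (Fin n) ℝ}
    (hS : S.PosDef) (hT : T.PosDef) (hST : (T - S).PosSemidef) :
    ((sqrtM T)⁻¹ * (T - S)).trace ≤ 2 * ((sqrtM T).trace - (sqrtM S).trace) :=
  trace_invsqrt_mul_diff_le_general hS hT
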